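/- For every LTLf formula there is an equivalent ALDLf formula computable in time linear in the size of the input formula; consequently, ALDLf satisfiability is PSPACE-hard. -/

import Mathlib

/-- Propositional formulas over atomic propositions `AP`. -/
inductive PropF (AP : Type) where
  | atom : AP → PropF AP
  | neg : PropF AP → PropF AP
  | conj : PropF AP → PropF AP → PropF AP
  | disj : PropF AP → PropF AP → PropF AP

/-- Truth of a propositional formula in a propositional interpretation. -/
def PropF.holds {AP : Type} (s : Set AP) : PropF AP → Prop
  | .atom p => p ∈ s
  | .neg ζ => ¬ ζ.holds s
  | .conj a b => a.holds s ∧ b.holds s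
  | .disj a b => a.holds s ∨ b.holds s

mutual
/-- ALDLf formulas. -/
inductive ALDLf (AP : Type) where
  | atom : AP → ALDLf AP
  | neg : ALDLf AP → ALDLf AP
  | conj : ALDLf AP → ALDLf AP → ALDLf AP
  | disj : ALDLf AP → ALDLf AP → ALDLf AP
  | dia : PathAut AP → ALDLf AP → ALDLf AP
  | box : PathAut AP → ALDLf AP → ALDLf AP

/-- Alphabet letters of a path automaton: forward propositional labels ζ,
backward (past) labels ζ⁻, and tests ψ?. -/
inductive PALabel (AP : Type) where
  | fwd : PropF AP → PALabel AP
  | bwd : PropF AP → PALabel AP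
  | test : ALDLf AP → PALabel AP

/-- A path automaton `(R, T, Δ, r, G)`: states, alphabet, transitions,
start state, accepting states.  States are natural numbers. -/
inductive PathAut (AP : Type) where
  | mk : List ℕ → List (PALabel AP) → List (ℕ × PALabel AP × ℕ) → ℕ → List ℕ → PathAut AP
end

/-- Satisfaction of a propositional formula at position `k` of a trace. -/
def propAt {AP : Type} (π : List (Set AP)) (k : ℕ) (ζ : PropF AP) : Prop :=
  ∃ s, π[k]? = some s ∧ ζ.holds s

/-- One step of a path automaton over a trace, with tests evaluated by the
oracle `T`. -/
def AutStep {AP : Type} (T : ℕ → ALDLf AP → Prop) (π : List (Set AP))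
    (Δ : List (ℕ × PALabel AP × ℕ)) (c c' : ℕ × ℕ) : Prop :=
  (c'.2 = c.2 + 1 ∧ ∃ ζ, (c.1, PALabel.fwd ζ, c'.1) ∈ Δ ∧ propAt π c.2 ζ) ∨
  (c'.2 + 1 = c.2 ∧ ∃ ζ, (c.1, PALabel.bwd ζ, c'.1) ∈ Δ ∧ propAt π c.2 ζ) ∨
  (c'.2 = c.2 ∧ ∃ ψ, (c.1, PALabel.test ψ, c'.1) ∈ Δ ∧ T c.2 ψ)

/-- `π,i,j ⊨ U`, with tests evaluated by the oracle `T`: either `i = j` and the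
start state is accepting, or there is a finite sequence of state–position pairs
following the transitions of `U` from `(r,i)` to an accepting state at `j`. -/
def AutRelO {AP : Type} (T : ℕ → ALDLf AP → Prop) (π : List (Set AP)) :
    PathAut AP → ℕ → ℕ → Prop
  | .mk _ _ Δ r G, i, j =>
    (i = j ∧ r ∈ G) ∨
    ∃ seq : List (ℕ × ℕ), seq.head? = some (r, i) ∧
      (∃ l, seq.getLast? = some l ∧ l.1 ∈ G ∧ l.2 = j) ∧
      (∀ e ∈ seq, e.2 < π.length) ∧
      (∀ m, ∀ h : m + 1 < seq.length,
        AutStep T π Δ (seq.get ⟨m, by omega⟩) (seq.get ⟨m + 1, h⟩))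

/-- Fuelled satisfaction relation for ALDLf.  The fuel strictly exceeds the
structural size (`sizeOf`) of every formula it is ever applied to, so
`satF (sizeOf φ) π i φ` agrees with the intended (well-founded) semantics. -/
def satF {AP : Type} : ℕ → List (Set AP) → ℕ → ALDLf AP → Prop
  | 0, _, _, _ => False
  | _ + 1, π, i, .atom p => ∃ s, π[i]? = some s ∧ p ∈ s
  | n + 1, π, i, .neg φ => ¬ satF n π i φ
  | n + 1, π, i, .conj a b => satF n π i a ∧ satF n π i b
  | n + 1, π, i, .disj a b => satF n π i a ∨ satF n π i b
  | n + 1, π, i, .dia U φ =>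
      ∃ j, j < π.length ∧ AutRelO (fun k ψ => satF n π k ψ) π U i j ∧ satF n π j φ
  | n + 1, π, i, .box U φ =>
      ∀ j, j < π.length → AutRelO (fun k ψ => satF n π k ψ) π U i j → satF n π j φ

/-- `π,i ⊨ φ` for ALDLf. -/
def ALDLf.Sat {AP : Type} (π : List (Set AP)) (i : ℕ) (φ : ALDLf AP) : Prop :=
  satF (sizeOf φ) π i φ

/-- `π,i,j ⊨ U` with tests evaluated by genuine ALDLf satisfaction. -/
def AutRel {AP : Type} (π : List (Set AP)) (U : PathAut AP) (i j : ℕ) : Prop :=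
  AutRelO (fun k ψ => ALDLf.Sat π k ψ) π U i j

/-- The size `|φ|` of an ALDLf formula, as in the paper. -/
def ALDLf.size {AP : Type} : ALDLf AP → ℕ
  | .atom _ => 1
  | .neg φ => 3 + φ.size
  | .conj a b => 3 + a.size + b.size
  | .disj a b => 3 + a.size + b.size
  | .dia (.mk R _ _ _ _) φ => 4 + R.length + φ.size
  | .box (.mk R _ _ _ _) φ => 4 + R.length + φ.size
/-- LTLf formulas. -/
inductive LTLf (AP : Type) where
  | atom : AP → LTLf AP
  | neg : LTLf AP → LTLf AP
  | conj : LTLf AP → LTLf AP → LTLf AP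
  | disj : LTLf AP → LTLf AP → LTLf AP
  | next : LTLf AP → LTLf AP
  | until_ : LTLf AP → LTLf AP → LTLf AP

/-- LTLf satisfaction `π,i ⊨ φ` over finite traces. -/
def LTLf.Sat {AP : Type} (π : List (Set AP)) : LTLf AP → ℕ → Prop
  | .atom p, i => ∃ s, π[i]? = some s ∧ p ∈ s
  | .neg φ, i => ¬ φ.Sat π i
  | .conj a b, i => a.Sat π i ∧ b.Sat π i
  | .disj a b, i => a.Sat π i ∨ b.Sat π i
  | .next φ, i => i + 1 < π.length ∧ φ.Sat π (i + 1)
  | .until_ a b, i => ∃ j, i ≤ j ∧ j < π.length ∧ b.Sat π j ∧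
      ∀ k, i ≤ k → k < j → a.Sat π k

/-- Size of an LTLf formula. -/
def LTLf.size {AP : Type} : LTLf AP → ℕ
  | .atom _ => 1
  | .neg φ => 1 + φ.size
  | .conj a b => 1 + a.size + b.size
  | .disj a b => 1 + a.size + b.size
  | .next φ => 1 + φ.size
  | .until_ a b => 1 + a.size + b.size

/-!
The translation is homomorphic on the Boolean connectives, sends `○φ` to `⟨U_next⟩φ` and
`φ U ψ` to `⟨U_until⟩ψ`, where `U_until` alternates the test `φ?` with a forward step; each
connective costs at most six symbols. An accepting run of a path automaton is a chain of its
steps, so the automaton semantics is reachability under the step relation, and for both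
automata the reachable configurations are read off from a one-line invariant. The fuelled
semantics `satF` does not depend on the fuel once it covers `sizeOf`, which gives the
compositional clauses of `ALDLf.Sat` used in the induction.
-/

section

variable {AP : Type}

open Relation

namespace ALDLf

theorem one_le_sizeOf (φ : ALDLf AP) : 1 ≤ sizeOf φ := by
  cases φ <;> simp <;> omega

theorem sizeOf_lt_of_test_mem {Δ : List (ℕ × PALabel AP × ℕ)} {s t : ℕ} {ψ : ALDLf AP}
    (h : (s, PALabel.test ψ, t) ∈ Δ) : sizeOf ψ < sizeOf Δ := by
  have := List.sizeOf_lt_of_mem h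
  simp only [Prod.mk.sizeOf_spec, PALabel.test.sizeOf_spec] at this
  omega

end ALDLf

theorem autRelO_congr {T T' : ℕ → ALDLf AP → Prop} {π : List (Set AP)} {R : List ℕ}
    {A : List (PALabel AP)} {Δ : List (ℕ × PALabel AP × ℕ)} {r : ℕ} {G : List ℕ} {i j : ℕ}
    (h : ∀ k ψ s t, (s, PALabel.test ψ, t) ∈ Δ → (T k ψ ↔ T' k ψ)) :
    AutRelO T π (.mk R A Δ r G) i j ↔ AutRelO T' π (.mk R A Δ r G) i j := by
  have hstep : ∀ c c', AutStep T π Δ c c' ↔ AutStep T' π Δ c c' := fun c c' => by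
    unfold AutStep
    refine or_congr_right (or_congr_right (and_congr_right fun _ => exists_congr fun ψ => ?_))
    exact and_congr_right fun hψ => h _ _ _ _ hψ
  simp only [AutRelO, hstep]

theorem satF_congr {n m : ℕ} {π : List (Set AP)} {i : ℕ} {φ : ALDLf AP}
    (hn : sizeOf φ ≤ n) (hm : sizeOf φ ≤ m) : satF n π i φ ↔ satF m π i φ := by
  induction n generalizing m i φ with
  | zero => exact absurd hn (by have := φ.one_le_sizeOf; omega)
  | succ n ih =>
    obtain ⟨m, rfl⟩ : ∃ m', m = m' + 1 := ⟨m - 1, by have := φ.one_le_sizeOf; omega⟩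
    cases φ with
    | atom => rfl
    | neg φ =>
      simp only [ALDLf.neg.sizeOf_spec] at hn hm
      simp only [satF, ih (m := m) (φ := φ) (by omega) (by omega)]
    | conj a b | disj a b =>
      simp only [ALDLf.conj.sizeOf_spec, ALDLf.disj.sizeOf_spec] at hn hm
      simp only [satF, ih (m := m) (φ := a) (by omega) (by omega),
        ih (m := m) (φ := b) (by omega) (by omega)]
    | dia U φ | box U φ =>
      obtain ⟨R, A, Δ, r, G⟩ := U
      simp only [ALDLf.dia.sizeOf_spec, ALDLf.box.sizeOf_spec, PathAut.mk.sizeOf_spec] at hn hm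
      have tests : ∀ k ψ s t, (s, PALabel.test ψ, t) ∈ Δ →
          (satF n π k ψ ↔ satF m π k ψ) := fun k ψ s t hψ => by
        have := ALDLf.sizeOf_lt_of_test_mem hψ
        exact ih (by omega) (by omega)
      simp only [satF, autRelO_congr tests,
        fun j => ih (m := m) (i := j) (φ := φ) (by omega) (by omega)]

namespace ALDLf

theorem sat_iff_satF {π : List (Set AP)} {i n : ℕ} {φ : ALDLf AP} (h : sizeOf φ ≤ n) :
    φ.Sat π i ↔ satF n π i φ :=
  satF_congr le_rfl h

theorem sat_atom {π : List (Set AP)} {i : ℕ} {p : AP} :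
    (atom p).Sat π i ↔ ∃ s, π[i]? = some s ∧ p ∈ s := by
  rw [sat_iff_satF (n := 1) (by simp)]
  rfl

theorem sat_neg {π : List (Set AP)} {i : ℕ} {φ : ALDLf AP} :
    (neg φ).Sat π i ↔ ¬ φ.Sat π i := by
  rw [sat_iff_satF (n := sizeOf φ + 1) (by simp; omega)]
  rfl

theorem sat_conj {π : List (Set AP)} {i : ℕ} {a b : ALDLf AP} :
    (conj a b).Sat π i ↔ a.Sat π i ∧ b.Sat π i := by
  rw [sat_iff_satF (n := sizeOf a + sizeOf b + 1) (by simp; omega), satF,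
    ← sat_iff_satF (by omega), ← sat_iff_satF (by omega)]

theorem sat_disj {π : List (Set AP)} {i : ℕ} {a b : ALDLf AP} :
    (disj a b).Sat π i ↔ a.Sat π i ∨ b.Sat π i := by
  rw [sat_iff_satF (n := sizeOf a + sizeOf b + 1) (by simp; omega), satF,
    ← sat_iff_satF (by omega), ← sat_iff_satF (by omega)]

theorem sat_dia {π : List (Set AP)} {i : ℕ} {U : PathAut AP} {φ : ALDLf AP} :
    (dia U φ).Sat π i ↔ ∃ j, j < π.length ∧ AutRel π U i j ∧ φ.Sat π j := by
  obtain ⟨R, A, Δ, r, G⟩ := U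
  have tests : ∀ k ψ s t, (s, PALabel.test ψ, t) ∈ Δ →
      (satF (sizeOf (PathAut.mk R A Δ r G) + sizeOf φ) π k ψ ↔ ψ.Sat π k) := fun k ψ s t hψ => by
    have := sizeOf_lt_of_test_mem hψ
    exact (sat_iff_satF (by simp only [PathAut.mk.sizeOf_spec]; omega)).symm
  rw [sat_iff_satF (n := sizeOf (PathAut.mk R A Δ r G) + sizeOf φ + 1) (by simp; omega)]
  simp only [satF, AutRel, autRelO_congr tests, ← sat_iff_satF (Nat.le_add_left _ _)]

end ALDLf

def AutMove (T : ℕ → ALDLf AP → Prop) (π : List (Set AP)) (Δ : List (ℕ × PALabel AP × ℕ))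
    (c c' : ℕ × ℕ) : Prop :=
  AutStep T π Δ c c' ∧ c'.2 < π.length

theorem autRelO_iff_reflTransGen {T : ℕ → ALDLf AP → Prop} {π : List (Set AP)} {R : List ℕ}
    {A : List (PALabel AP)} {Δ : List (ℕ × PALabel AP × ℕ)} {r : ℕ} {G : List ℕ} {i j : ℕ}
    (hi : i < π.length) :
    AutRelO T π (.mk R A Δ r G) i j ↔ ∃ q ∈ G, ReflTransGen (AutMove T π Δ) (r, i) (q, j) := by
  simp only [AutRelO, List.get_eq_getElem, ← List.isChain_iff_getElem]
  constructor
  · rintro (⟨rfl, hr⟩ | ⟨seq, hhead, ⟨⟨q, j'⟩, hlast, hq, rfl⟩, hpos, hchain⟩)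
    · exact ⟨r, hr, .refl⟩
    obtain ⟨l, rfl⟩ := List.head?_eq_some_iff.mp hhead
    refine ⟨q, hq, List.relationReflTransGen_of_exists_isChain_cons l ?_ ?_⟩
    · exact hchain.imp_of_mem_imp fun c c' _ hc' hstep => ⟨hstep, hpos c' hc'⟩
    · exact Option.some_injective _ ((List.getLast?_eq_some_getLast _).symm.trans hlast)
  · rintro ⟨q, hq, hreach⟩
    obtain ⟨l, hchain, hlast⟩ := List.exists_isChain_cons_of_relationReflTransGen hreach
    have hlast? : ((r, i) :: l).getLast? = some (q, j) := by
      rw [List.getLast?_eq_some_getLast (List.cons_ne_nil _ _), hlast]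
    refine .inr ⟨(r, i) :: l, rfl, ⟨(q, j), hlast?, hq, rfl⟩, ?_, hchain.imp fun _ _ h => h.1⟩
    exact List.forall_mem_cons.2
      ⟨hi, hchain.cons_induction (fun c => c.2 < π.length) l (fun _ _ h _ => h.2) hi⟩

/-- `PropF` has no truth constant; any atom yields a tautology. -/
def PropF.top (a : AP) : PropF AP := .disj (.atom a) (.neg (.atom a))

theorem propAt_top {π : List (Set AP)} {k : ℕ} {a : AP} :
    propAt π k (PropF.top a) ↔ k < π.length := by
  simp [propAt, PropF.top, PropF.holds, em, ← Option.isSome_iff_exists]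

def PathAut.next (a : AP) : PathAut AP :=
  .mk [0, 1] [.fwd (.top a)] [(0, .fwd (.top a), 1)] 0 [1]

def PathAut.untilSteps (a : AP) (ψ : ALDLf AP) : List (ℕ × PALabel AP × ℕ) :=
  [(0, .test ψ, 1), (1, .fwd (.top a), 0)]

def PathAut.until_ (a : AP) (ψ : ALDLf AP) : PathAut AP :=
  .mk [0, 1] [.test ψ, .fwd (.top a)] (PathAut.untilSteps a ψ) 0 [0]

section

variable {T : ℕ → ALDLf AP → Prop} {π : List (Set AP)} {a : AP} {i j : ℕ}

theorem autMove_next_iff {q k q' k' : ℕ} :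
    AutMove T π [(0, .fwd (.top a), 1)] (q, k) (q', k') ↔
      q = 0 ∧ q' = 1 ∧ k' = k + 1 ∧ k' < π.length := by
  grind [AutMove, AutStep, propAt_top]

theorem autRelO_next (hi : i < π.length) :
    AutRelO T π (.next a) i j ↔ j = i + 1 ∧ j < π.length := by
  rw [PathAut.next, autRelO_iff_reflTransGen hi]
  constructor
  · rintro ⟨q, hq, hreach⟩
    rw [List.mem_singleton] at hq
    subst hq
    rcases ReflTransGen.cases_head_iff.1 hreach with h | ⟨⟨q', k'⟩, hmove, hrest⟩
    · simp at h
    obtain ⟨-, rfl, rfl, hk⟩ := autMove_next_iff.1 hmove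
    rcases ReflTransGen.cases_head_iff.1 hrest with h | ⟨⟨_, _⟩, hmove', -⟩
    · obtain rfl : i + 1 = j := (Prod.ext_iff.1 h).2
      exact ⟨rfl, hk⟩
    · exact absurd (autMove_next_iff.1 hmove').1 one_ne_zero
  · rintro ⟨rfl, hj⟩
    exact ⟨1, by simp, .single (autMove_next_iff.2 ⟨rfl, rfl, rfl, hj⟩)⟩

theorem autMove_until_iff {ψ : ALDLf AP} {q k q' k' : ℕ} :
    AutMove T π (PathAut.untilSteps a ψ) (q, k) (q', k') ↔
      (q = 0 ∧ q' = 1 ∧ k' = k ∧ T k ψ ∧ k < π.length) ∨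
      (q = 1 ∧ q' = 0 ∧ k' = k + 1 ∧ k' < π.length) := by
  grind [AutMove, AutStep, PathAut.untilSteps, propAt_top]

theorem autRelO_until {ψ : ALDLf AP} (hi : i < π.length) (hj : j < π.length) :
    AutRelO T π (.until_ a ψ) i j ↔ i ≤ j ∧ ∀ k, i ≤ k → k < j → T k ψ := by
  rw [PathAut.until_, autRelO_iff_reflTransGen hi]
  constructor
  · rintro ⟨q, hq, hreach⟩
    rw [List.mem_singleton] at hq
    subst hq
    -- in state `1` the test at the current position has already been passed
    have inv : ∀ {c : ℕ × ℕ}, ReflTransGen (AutMove T π (PathAut.untilSteps a ψ)) (0, i) c →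
        i ≤ c.2 ∧ ∀ k, i ≤ k → k < c.2 + c.1 → T k ψ := by
      intro c h
      induction h with
      | refl => exact ⟨le_rfl, fun k h1 h2 => absurd h2 (by omega)⟩
      | @tail c c' _ hmove ih =>
        obtain ⟨hic, hT⟩ := ih
        rcases autMove_until_iff.1 hmove with ⟨hq, hq', hk, hTk, -⟩ | ⟨hq, hq', hk, -⟩
        · refine ⟨by omega, fun k h1 h2 => ?_⟩
          rcases Nat.lt_or_ge k c.2 with h | h
          · exact hT k h1 (by omega)
          · exact (show k = c.2 by omega) ▸ hTk
        · exact ⟨by omega, fun k h1 h2 => hT k h1 (by omega)⟩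
    simpa using inv hreach
  · rintro ⟨hij, hT⟩
    refine ⟨0, by simp, ?_⟩
    induction j, hij using Nat.le_induction with
    | base => exact .refl
    | succ j hij ih =>
      have test : AutMove T π (PathAut.untilSteps a ψ) (0, j) (1, j) :=
        autMove_until_iff.2 (.inl ⟨rfl, rfl, rfl, hT j hij (by omega), by omega⟩)
      have advance : AutMove T π (PathAut.untilSteps a ψ) (1, j) (0, j + 1) :=
        autMove_until_iff.2 (.inr ⟨rfl, rfl, rfl, hj⟩)
      exact ((ih (by omega) fun k h1 h2 => hT k h1 (by omega)).tail test).tail advance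

end

namespace LTLf

def toALDLf (a : AP) : LTLf AP → ALDLf AP
  | .atom p => .atom p
  | .neg φ => .neg (φ.toALDLf a)
  | .conj φ ψ => .conj (φ.toALDLf a) (ψ.toALDLf a)
  | .disj φ ψ => .disj (φ.toALDLf a) (ψ.toALDLf a)
  | .next φ => .dia (.next a) (φ.toALDLf a)
  | .until_ φ ψ => .dia (.until_ a (φ.toALDLf a)) (ψ.toALDLf a)

theorem size_toALDLf_le (a : AP) (φ : LTLf AP) : (φ.toALDLf a).size ≤ 6 * φ.size := by
  induction φ <;>
    simp only [toALDLf, PathAut.next, PathAut.until_, ALDLf.size, size, List.length_cons,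
      List.length_nil] <;>
    omega

theorem sat_iff_sat_toALDLf (a : AP) (φ : LTLf AP) {π : List (Set AP)} {i : ℕ}
    (hi : i < π.length) : φ.Sat π i ↔ (φ.toALDLf a).Sat π i := by
  induction φ generalizing i with
  | atom p => exact ALDLf.sat_atom.symm
  | neg φ ih => rw [toALDLf, ALDLf.sat_neg, ← ih hi, Sat]
  | conj φ ψ ihφ ihψ => rw [toALDLf, ALDLf.sat_conj, ← ihφ hi, ← ihψ hi, Sat]
  | disj φ ψ ihφ ihψ => rw [toALDLf, ALDLf.sat_disj, ← ihφ hi, ← ihψ hi, Sat]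
  | next φ ih =>
    simp only [Sat, toALDLf, ALDLf.sat_dia, AutRel, autRelO_next hi]
    constructor
    · rintro ⟨hlt, hφ⟩
      exact ⟨i + 1, hlt, ⟨rfl, hlt⟩, (ih hlt).1 hφ⟩
    · rintro ⟨_, hlt, ⟨rfl, -⟩, hφ⟩
      exact ⟨hlt, (ih hlt).2 hφ⟩
  | until_ φ ψ ihφ ihψ =>
    simp only [Sat, toALDLf, ALDLf.sat_dia, AutRel]
    refine exists_congr fun j => ⟨fun ⟨hij, hj, hψ, hφ⟩ => ⟨hj, ?_, (ihψ hj).1 hψ⟩,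
      fun ⟨hj, hrun, hψ⟩ => ?_⟩
    · exact (autRelO_until hi hj).2 ⟨hij, fun k h1 h2 => (ihφ (by omega)).1 (hφ k h1 h2)⟩
    · obtain ⟨hij, hφ⟩ := (autRelO_until hi hj).1 hrun
      exact ⟨hij, hj, (ihψ hj).2 hψ, fun k h1 h2 => (ihφ (by omega)).2 (hφ k h1 h2)⟩

def someAtom : LTLf AP → AP
  | .atom p => p
  | .neg φ | .next φ => φ.someAtom
  | .conj φ _ | .disj φ _ | .until_ φ _ => φ.someAtom

end LTLf

end

/-- every LTLf formula has an equivalent ALDLf formula of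
linearly bounded size (computable in linear time); consequently, since LTLf
satisfiability is PSPACE-complete and the translation preserves satisfaction,
ALDLf satisfiability is PSPACE-hard. -/
theorem ltlf_to_aldlf_linear (AP : Type) :
    ∃ (c : ℕ) (tr : LTLf AP → ALDLf AP), ∀ φ : LTLf AP,
      (tr φ).size ≤ c * φ.size ∧
      ∀ (π : List (Set AP)) (i : ℕ), i < π.length →
        (LTLf.Sat π φ i ↔ ALDLf.Sat π i (tr φ)) :=
  -- the atom only serves to build `PropF.top`, and `φ` itself supplies one
  ⟨6, fun φ => φ.toALDLf φ.someAtom, fun φ =>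
    ⟨φ.size_toALDLf_le _, fun _ _ hi => φ.sat_iff_sat_toALDLf _ hi⟩⟩
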